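/- Degree bound in Göttsche's formula: the coefficient P_n(t) of q^n in the Göttsche product is a polynomial in t of degree exactly 4n, with leading coefficient 1 and constant coefficient 1 (for any b1, b2 ∈ ℕ); equivalently b_0(X^[n]) = b_{4n}(X^[n]) = 1. -/

import Mathlib

open PowerSeries Polynomial Finset

section Geom
variable {R : Type*} [CommRing R]

/-- Geometric series `∑ r^j q^{m j}`. -/
noncomputable def geom (r : R) (m : ℕ) : PowerSeries R :=
  PowerSeries.mk fun k => if m ∣ k then r ^ (k / m) else 0

lemma constantCoeff_geom (r : R) (m : ℕ) :
    PowerSeries.constantCoeff (R := R) (geom r m) = 1 := by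
  rw [← PowerSeries.coeff_zero_eq_constantCoeff]
  simp [geom]

lemma one_sub_mul_geom (r : R) (m : ℕ) (hm : 1 ≤ m) :
    (1 - PowerSeries.C (R := R) r * PowerSeries.X ^ m) * geom r m = 1 := by
  ext k
  rw [sub_mul, one_mul, map_sub, mul_assoc, PowerSeries.coeff_C_mul,
    mul_comm (PowerSeries.X (R := R) ^ m) (geom r m), PowerSeries.coeff_mul_X_pow',
    PowerSeries.coeff_one]
  simp only [geom, PowerSeries.coeff_mk]
  by_cases hk : k = 0
  · subst hk
    simp only [Nat.dvd_zero, if_pos, Nat.zero_div, pow_zero, if_neg (by omega : ¬ m ≤ 0), mul_zero, sub_zero, if_pos rfl]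
  · simp only [hk, if_neg hk]
    by_cases hd : m ∣ k
    · obtain ⟨t, rfl⟩ := hd
      have hm0 : 0 < m := hm
      have ht : 1 ≤ t := by
        rcases Nat.eq_zero_or_pos t with h | h
        · exfalso; apply hk; simp [h]
        · exact h
      have h1 : m ≤ m * t := Nat.le_mul_of_pos_right m ht
      have h2 : m * t - m = m * (t - 1) := by rw [Nat.mul_sub, mul_one]
      rw [if_pos ⟨t, rfl⟩, if_pos h1, h2, if_pos ⟨t - 1, rfl⟩,
        Nat.mul_div_cancel_left _ hm0, Nat.mul_div_cancel_left _ hm0]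
      have : r ^ t = r * r ^ (t - 1) := by
        conv_lhs => rw [show t = 1 + (t - 1) by omega]
        rw [pow_add, pow_one]
      rw [this, sub_self]
      simp
    · rw [if_neg hd]
      by_cases hle : m ≤ k
      · have : ¬ m ∣ (k - m) := by
          intro ⟨u, hu⟩
          exact hd ⟨u + 1, by rw [Nat.mul_add, mul_one]; omega⟩
        rw [if_pos hle, if_neg this, mul_zero, sub_zero]
        simp
      · rw [if_neg hle, mul_zero, sub_zero]
        simp

lemma geom_zero (m : ℕ) : geom (0 : R) m = 1 := by
  ext k
  simp only [geom, PowerSeries.coeff_mk, PowerSeries.coeff_one]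
  by_cases hk : k = 0
  · subst hk; simp
  · rw [if_neg hk]
    by_cases hd : m ∣ k
    · have hm0 : 0 < m := by
        rcases Nat.eq_zero_or_pos m with h | h
        · subst h; simp at hd; omega
        · exact h
      have : k / m ≠ 0 := by
        have := Nat.le_of_dvd (by omega) hd
        have := Nat.one_le_div_iff hm0 |>.mpr this
        omega
      rw [if_pos hd, zero_pow this]
    · rw [if_neg hd]

lemma geomInvOfUnit_eq (f g : PowerSeries R) (hf : PowerSeries.constantCoeff (R := R) f = 1)
    (h : f * g = 1) : PowerSeries.invOfUnit f 1 = g := by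
  have h2 := PowerSeries.mul_invOfUnit f 1 (by simp [hf])
  calc PowerSeries.invOfUnit f 1 = (f * g) * PowerSeries.invOfUnit f 1 := by rw [h, one_mul]
    _ = g * (f * PowerSeries.invOfUnit f 1) := by ring
    _ = g := by rw [h2, mul_one]

end Geom

/-- The variable `t` viewed as a constant of the power-series ring `(ℤ[t])[[q]]`. -/
noncomputable def Tvar : PowerSeries (Polynomial ℤ) := PowerSeries.C (R := Polynomial ℤ) Polynomial.X

/-- The `m`-th factor of Göttsche's product. -/
noncomputable def gottscheFactor (b1 b2 m : ℕ) : PowerSeries (Polynomial ℤ) :=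
  ((1 + Tvar ^ (2*m-1) * PowerSeries.X ^ m) * (1 + Tvar ^ (2*m+1) * PowerSeries.X ^ m)) ^ b1 *
  PowerSeries.invOfUnit
    ((1 - Tvar ^ (2*m-2) * PowerSeries.X ^ m) * (1 - Tvar ^ (2*m+2) * PowerSeries.X ^ m) *
      (1 - Tvar ^ (2*m) * PowerSeries.X ^ m) ^ b2) 1

/-- The coefficient of `q^n` in Göttsche's product (only factors with `m ≤ n` contribute). -/
noncomputable def gottscheCoeff (b1 b2 n : ℕ) : Polynomial ℤ :=
  PowerSeries.coeff (R := Polynomial ℤ) n (∏ m ∈ Finset.Icc 1 n, gottscheFactor b1 b2 m)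

lemma Tvar_pow (a : ℕ) : Tvar ^ a = PowerSeries.C (R := Polynomial ℤ) (Polynomial.X ^ a) := by
  rw [Tvar, ← map_pow]

lemma constantCoeff_one_sub (a m : ℕ) (hm : 1 ≤ m) :
    PowerSeries.constantCoeff (R := Polynomial ℤ) (1 - Tvar ^ a * PowerSeries.X ^ m) = 1 := by
  rw [Tvar_pow]
  simp [map_pow, zero_pow (by omega : m ≠ 0)]

lemma constantCoeff_one_add (a m : ℕ) (hm : 1 ≤ m) :
    PowerSeries.constantCoeff (R := Polynomial ℤ) (1 + Tvar ^ a * PowerSeries.X ^ m) = 1 := by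
  rw [Tvar_pow]
  simp [map_pow, zero_pow (by omega : m ≠ 0)]

lemma gottscheFactor_eq (b1 b2 m : ℕ) (hm : 1 ≤ m) :
    gottscheFactor b1 b2 m =
      ((1 + Tvar ^ (2*m-1) * PowerSeries.X ^ m) * (1 + Tvar ^ (2*m+1) * PowerSeries.X ^ m)) ^ b1 *
      (geom ((Polynomial.X : Polynomial ℤ) ^ (2*m-2)) m * geom ((Polynomial.X : Polynomial ℤ) ^ (2*m+2)) m *
        geom ((Polynomial.X : Polynomial ℤ) ^ (2*m)) m ^ b2) := by
  unfold gottscheFactor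
  congr 1
  apply geomInvOfUnit_eq
  · rw [map_mul, map_mul, map_pow, constantCoeff_one_sub _ _ hm,
      constantCoeff_one_sub _ _ hm, constantCoeff_one_sub _ _ hm]
    simp
  · have hA := one_sub_mul_geom ((Polynomial.X : Polynomial ℤ) ^ (2*m-2)) m hm
    have hB := one_sub_mul_geom ((Polynomial.X : Polynomial ℤ) ^ (2*m+2)) m hm
    have hC := one_sub_mul_geom ((Polynomial.X : Polynomial ℤ) ^ (2*m)) m hm
    calc (1 - Tvar ^ (2*m-2) * PowerSeries.X ^ m) * (1 - Tvar ^ (2*m+2) * PowerSeries.X ^ m) *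
          (1 - Tvar ^ (2*m) * PowerSeries.X ^ m) ^ b2 *
          (geom ((Polynomial.X : Polynomial ℤ) ^ (2*m-2)) m * geom ((Polynomial.X : Polynomial ℤ) ^ (2*m+2)) m *
            geom ((Polynomial.X : Polynomial ℤ) ^ (2*m)) m ^ b2)
        = ((1 - PowerSeries.C (R := Polynomial ℤ) (Polynomial.X ^ (2*m-2)) * PowerSeries.X ^ m) * geom ((Polynomial.X : Polynomial ℤ) ^ (2*m-2)) m) *
          ((1 - PowerSeries.C (R := Polynomial ℤ) (Polynomial.X ^ (2*m+2)) * PowerSeries.X ^ m) * geom ((Polynomial.X : Polynomial ℤ) ^ (2*m+2)) m) *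
          ((1 - PowerSeries.C (R := Polynomial ℤ) (Polynomial.X ^ (2*m)) * PowerSeries.X ^ m) ^ b2 * geom ((Polynomial.X : Polynomial ℤ) ^ (2*m)) m ^ b2) := by
          rw [Tvar_pow, Tvar_pow, Tvar_pow]; ring
      _ = 1 := by rw [← mul_pow, hA, hB, hC, one_pow, mul_one, mul_one]

def Slope (c : ℕ) (f : PowerSeries (Polynomial ℤ)) : Prop :=
  ∀ k, ((PowerSeries.coeff (R := Polynomial ℤ) k) f).natDegree ≤ c * k

lemma Slope.one (c : ℕ) : Slope c 1 := by
  intro k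
  rw [PowerSeries.coeff_one]
  split_ifs <;> simp

lemma Slope.mul {c : ℕ} {f g : PowerSeries (Polynomial ℤ)} (hf : Slope c f) (hg : Slope c g) :
    Slope c (f * g) := by
  intro k
  rw [PowerSeries.coeff_mul]
  apply Polynomial.natDegree_sum_le_of_forall_le
  intro p hp
  calc ((PowerSeries.coeff (R := Polynomial ℤ) p.1) f * (PowerSeries.coeff (R := Polynomial ℤ) p.2) g).natDegree
      ≤ _ + _ := Polynomial.natDegree_mul_le
    _ ≤ c * p.1 + c * p.2 := add_le_add (hf p.1) (hg p.2)
    _ = c * k := by rw [← Nat.mul_add, Finset.HasAntidiagonal.mem_antidiagonal.mp hp]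

lemma Slope.pow {c : ℕ} {f : PowerSeries (Polynomial ℤ)} (hf : Slope c f) (b : ℕ) :
    Slope c (f ^ b) := by
  induction b with
  | zero => simpa using Slope.one c
  | succ b ih => rw [pow_succ]; exact ih.mul hf

lemma slope_one_add (c a m : ℕ) (hm : 1 ≤ m) (ha : a ≤ c * m) :
    Slope c (1 + Tvar ^ a * PowerSeries.X ^ m) := by
  intro k
  rw [Tvar_pow, map_add, PowerSeries.coeff_one, PowerSeries.coeff_C_mul,
    PowerSeries.coeff_X_pow]
  by_cases hk : k = m
  · subst hk
    rw [if_neg (by omega), if_pos rfl, mul_one, zero_add, Polynomial.natDegree_X_pow]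
    exact ha
  · rw [if_neg hk, mul_zero, add_zero]
    split_ifs <;> simp

lemma slope_geom (c a m : ℕ) (ha : a ≤ c * m) :
    Slope c (geom ((Polynomial.X : Polynomial ℤ) ^ a) m) := by
  intro k
  simp only [geom, PowerSeries.coeff_mk]
  split_ifs with h
  · rw [← pow_mul, Polynomial.natDegree_X_pow]
    calc a * (k / m) ≤ c * m * (k / m) := Nat.mul_le_mul_right _ ha
      _ = c * (k / m * m) := by ring
      _ ≤ c * k := Nat.mul_le_mul_left _ (Nat.div_mul_le_self k m)
  · simp

lemma slope_factor (b1 b2 c m : ℕ) (hm : 1 ≤ m) (hc : 2 * m + 2 ≤ c * m) :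
    Slope c (gottscheFactor b1 b2 m) := by
  rw [gottscheFactor_eq b1 b2 m hm]
  have h1 : 2 * m - 1 ≤ c * m := by omega
  have h2 : 2 * m + 1 ≤ c * m := by omega
  have h3 : 2 * m - 2 ≤ c * m := by omega
  have h4 : 2 * m ≤ c * m := by omega
  exact (((slope_one_add c _ m hm h1).mul (slope_one_add c _ m hm h2)).pow b1).mul
    (((slope_geom c _ m h3).mul (slope_geom c _ m hc)).mul ((slope_geom c _ m h4).pow b2))

lemma constantCoeff_factor (b1 b2 m : ℕ) (hm : 1 ≤ m) :
    PowerSeries.constantCoeff (R := Polynomial ℤ) (gottscheFactor b1 b2 m) = 1 := by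
  rw [gottscheFactor_eq b1 b2 m hm]
  simp [map_mul, map_pow, constantCoeff_one_add _ _ hm, constantCoeff_geom]

noncomputable def e0 : Polynomial ℤ →+* ℤ := Polynomial.evalRingHom 0

lemma map_e0_geom (r : Polynomial ℤ) (m : ℕ) :
    PowerSeries.map e0 (geom r m) = geom (e0 r) m := by
  ext k
  simp [geom, PowerSeries.coeff_map, apply_ite e0, map_pow]

lemma e0_X_pow (a : ℕ) (ha : 1 ≤ a) : e0 ((Polynomial.X : Polynomial ℤ) ^ a) = 0 := by
  simp [e0, zero_pow (by omega : a ≠ 0)]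

lemma map_e0_one_add (a m : ℕ) (ha : 1 ≤ a) :
    PowerSeries.map e0 (1 + Tvar ^ a * PowerSeries.X ^ m) = 1 := by
  rw [Tvar_pow, map_add, map_one, map_mul, PowerSeries.map_C, e0_X_pow a ha, map_pow,
    PowerSeries.map_X]
  simp

lemma map_e0_factor (b1 b2 m : ℕ) (hm : 2 ≤ m) :
    PowerSeries.map e0 (gottscheFactor b1 b2 m) = 1 := by
  rw [gottscheFactor_eq b1 b2 m (by omega), map_mul, map_pow, map_mul,
    map_e0_one_add _ _ (by omega), map_e0_one_add _ _ (by omega), map_mul, map_mul, map_pow,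
    map_e0_geom, map_e0_geom, map_e0_geom, e0_X_pow _ (by omega), e0_X_pow _ (by omega),
    e0_X_pow _ (by omega), geom_zero]
  simp

lemma map_e0_factor_one (b1 b2 : ℕ) :
    PowerSeries.map e0 (gottscheFactor b1 b2 1) = geom (1 : ℤ) 1 := by
  rw [gottscheFactor_eq b1 b2 1 le_rfl, map_mul, map_pow, map_mul,
    map_e0_one_add _ _ (by norm_num), map_e0_one_add _ _ (by norm_num), map_mul, map_mul,
    map_pow, map_e0_geom, map_e0_geom, map_e0_geom, e0_X_pow (2 * 1 + 2) (by norm_num),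
    e0_X_pow (2 * 1) (by norm_num), geom_zero]
  have h0 : e0 ((Polynomial.X : Polynomial ℤ) ^ (2 * 1 - 2)) = 1 := by
    norm_num [e0]
  rw [h0]
  simp

/-- Degree bound in Göttsche's formula: `P_n` has degree exactly `4n`, constant
coefficient `1` and leading coefficient `1`; i.e. `b₀(X^[n]) = b_{4n}(X^[n]) = 1`. -/
theorem gottsche_degree_bound (b1 b2 n : ℕ) :
    (gottscheCoeff b1 b2 n).natDegree = 4 * n ∧
      (gottscheCoeff b1 b2 n).coeff 0 = 1 ∧
      (gottscheCoeff b1 b2 n).coeff (4 * n) = 1 := by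
  rcases Nat.eq_zero_or_pos n with rfl | hn
  · have h : gottscheCoeff b1 b2 0 = 1 := by
      rw [gottscheCoeff, Finset.Icc_eq_empty (by omega), Finset.prod_empty]
      simp
    rw [h]
    norm_num
  have hsplit : Finset.Icc 1 n = insert 1 (Finset.Icc 2 n) := by
    ext x; simp only [Finset.mem_Icc, Finset.mem_insert]; omega
  have hnot : (1 : ℕ) ∉ Finset.Icc 2 n := by simp
  set G : PowerSeries (Polynomial ℤ) := ∏ m ∈ Finset.Icc 2 n, gottscheFactor b1 b2 m with hG
  set E : PowerSeries (Polynomial ℤ) :=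
    ((1 + Tvar ^ 1 * PowerSeries.X ^ 1) * (1 + Tvar ^ 3 * PowerSeries.X ^ 1)) ^ b1 *
      (geom ((Polynomial.X : Polynomial ℤ) ^ 0) 1 *
        geom ((Polynomial.X : Polynomial ℤ) ^ 2) 1 ^ b2) with hE
  have hfac1 : gottscheFactor b1 b2 1 = geom ((Polynomial.X : Polynomial ℤ) ^ 4) 1 * E := by
    rw [gottscheFactor_eq b1 b2 1 le_rfl, hE]
    norm_num
    ring
  set B : PowerSeries (Polynomial ℤ) := E * G with hB
  have hPB : (∏ m ∈ Finset.Icc 1 n, gottscheFactor b1 b2 m) =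
      geom ((Polynomial.X : Polynomial ℤ) ^ 4) 1 * B := by
    rw [hsplit, Finset.prod_insert hnot, hfac1, hB, ← hG]
    ring
  have hSB : Slope 3 B := by
    apply Slope.mul
    · exact ((((slope_one_add 3 1 1 le_rfl (by norm_num)).mul
        (slope_one_add 3 3 1 le_rfl (by norm_num))).pow b1).mul
        ((slope_geom 3 0 1 (by norm_num)).mul ((slope_geom 3 2 1 (by norm_num)).pow b2)))
    · apply Finset.prod_induction _ (Slope 3) (fun _ _ => Slope.mul) (Slope.one 3)
      intro m hm
      have h2 : 2 ≤ m := (Finset.mem_Icc.mp hm).1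
      exact slope_factor b1 b2 3 m (by omega) (by omega)
  have hB0 : PowerSeries.coeff (R := Polynomial ℤ) 0 B = 1 := by
    rw [PowerSeries.coeff_zero_eq_constantCoeff, hB, map_mul, hE, hG, map_mul, map_pow,
      map_mul, map_mul, map_pow, constantCoeff_one_add _ _ le_rfl,
      constantCoeff_one_add _ _ le_rfl, constantCoeff_geom, constantCoeff_geom, map_prod]
    rw [Finset.prod_congr rfl fun m hm =>
      constantCoeff_factor b1 b2 m (by have := (Finset.mem_Icc.mp hm).1; omega)]
    simp
  have hco : ∀ i, PowerSeries.coeff (R := Polynomial ℤ) i (geom ((Polynomial.X : Polynomial ℤ) ^ 4) 1)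
      = Polynomial.X ^ (4 * i) := by
    intro i
    simp [geom, ← pow_mul, mul_comm]
  have key : gottscheCoeff b1 b2 n = ∑ p ∈ Finset.HasAntidiagonal.antidiagonal n,
      Polynomial.X ^ (4 * p.1) * PowerSeries.coeff (R := Polynomial ℤ) p.2 B := by
    rw [gottscheCoeff, hPB, PowerSeries.coeff_mul]
    exact Finset.sum_congr rfl fun p _ => by rw [hco]
  have hterm : ∀ p ∈ Finset.HasAntidiagonal.antidiagonal n,
      (Polynomial.X ^ (4 * p.1) * PowerSeries.coeff (R := Polynomial ℤ) p.2 B).natDegree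
        ≤ 4 * p.1 + 3 * p.2 := by
    intro p _
    calc (Polynomial.X ^ (4 * p.1) * PowerSeries.coeff (R := Polynomial ℤ) p.2 B).natDegree
        ≤ (Polynomial.X ^ (4 * p.1) : Polynomial ℤ).natDegree
            + (PowerSeries.coeff (R := Polynomial ℤ) p.2 B).natDegree := Polynomial.natDegree_mul_le
      _ ≤ 4 * p.1 + 3 * p.2 := add_le_add (by simp) (hSB p.2)
  have hdegle : (gottscheCoeff b1 b2 n).natDegree ≤ 4 * n := by
    rw [key]
    apply Polynomial.natDegree_sum_le_of_forall_le
    intro p hp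
    have hpk := Finset.HasAntidiagonal.mem_antidiagonal.mp hp
    calc _ ≤ 4 * p.1 + 3 * p.2 := hterm p hp
      _ ≤ 4 * n := by omega
  have htop : (gottscheCoeff b1 b2 n).coeff (4 * n) = 1 := by
    rw [key, Polynomial.finset_sum_coeff,
      Finset.sum_eq_single_of_mem (n, 0) (by simp)]
    · rw [hB0, mul_one, Polynomial.coeff_X_pow, if_pos rfl]
    · intro p hp hne
      have hpk := Finset.HasAntidiagonal.mem_antidiagonal.mp hp
      have hp2 : 0 < p.2 := by
        rcases Nat.eq_zero_or_pos p.2 with h | h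
        · exact absurd (Prod.ext (by omega) h) hne
        · exact h
      apply Polynomial.coeff_eq_zero_of_natDegree_lt
      calc _ ≤ 4 * p.1 + 3 * p.2 := hterm p hp
        _ < 4 * n := by omega
  have hzero : (gottscheCoeff b1 b2 n).coeff 0 = 1 := by
    rw [Polynomial.coeff_zero_eq_eval_zero]
    have he : (gottscheCoeff b1 b2 n).eval 0 = e0 (gottscheCoeff b1 b2 n) := rfl
    rw [he, gottscheCoeff, ← PowerSeries.coeff_map, map_prod, hsplit,
      Finset.prod_insert hnot, map_e0_factor_one,
      Finset.prod_congr rfl fun m hm =>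
        map_e0_factor b1 b2 m (Finset.mem_Icc.mp hm).1]
    simp [geom]
  exact ⟨le_antisymm hdegle (Polynomial.le_natDegree_of_ne_zero (by rw [htop]; norm_num)),
    hzero, htop⟩
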